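/- arXiv:1309.5522 — 2 statements merged into one kernel-verified Lean document; each statement's English description precedes it below -/
import Mathlib

section
/- A history H (in which each write assigns a distinct value and every read returns the value of some write that finishes before the read starts) is 1-atomic if and only if no two forward zones of H overlap and no backward zone of H is contained entirely in a forward zone. -/
/-!
In a 1-atomic order no write lies between a write and its reads, so if `w₁` precedes `w₂` then
the whole cluster of `w₁` precedes the whole cluster of `w₂`. Real-time precedence then forces
`smax` of the earlier cluster below `fmin` of the later one, and clusters separated this way
have neither overlapping forward zones nor a backward zone inside a forward zone.

Conversely, under the two zone conditions the low endpoint `zoneL` is compatible with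
real-time precedence: if `a.f < b.s` for operations of distinct clusters, then the cluster of
`a` has the smaller `zoneL`. As all endpoints are distinct, `zoneL` separates clusters, so
sorting the operations by `zoneL` of their cluster and then by start time gives a valid order
in which each cluster is a block headed by its write.
-/

open scoped Classical

/-- An operation on a single register. -/
structure Op where
  s : ℝ
  f : ℝ
  isRead : Bool
  val : ℕ

abbrev History := Finset Op

def Op.isWrite (op : Op) : Prop := op.isRead = false

/-- Well-formedness of a history: operations have positive duration, all endpoints
are distinct, writes have distinct values, and every read has a dictating write
that finishes before the read starts. -/
def Wf (H : History) : Prop :=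
  (∀ op ∈ H, op.s < op.f) ∧
  (∀ op1 ∈ H, ∀ op2 ∈ H, op1 ≠ op2 →
    op1.s ≠ op2.s ∧ op1.f ≠ op2.f ∧ op1.s ≠ op2.f) ∧
  (∀ w1 ∈ H, ∀ w2 ∈ H, w1.isWrite → w2.isWrite → w1.val = w2.val → w1 = w2) ∧
  (∀ r ∈ H, r.isRead = true → ∃ w ∈ H, w.isWrite ∧ w.val = r.val ∧ w.f < r.s)

/-- `a` occurs before `b` in the total order represented by the list `l`. -/
def Before (l : List Op) (a b : Op) : Prop :=
  ∃ l1 l2 l3, l = l1 ++ a :: l2 ++ b :: l3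

/-- A total order (list) is valid if it respects real-time precedence. -/
def Valid (l : List Op) : Prop :=
  ∀ a ∈ l, ∀ b ∈ l, a.f < b.s → Before l a b

/-- `l` is a total order on exactly the operations of `H`. -/
def IsLinearization (H : History) (l : List Op) : Prop :=
  l.Nodup ∧ ∀ op, op ∈ l ↔ op ∈ H

/-- In the total order `l`, every read follows its dictating write, separated from
it by at most `k - 1` other writes. -/
def KAtomicOrder (k : ℕ) (l : List Op) : Prop :=
  ∀ r ∈ l, r.isRead = true → ∀ w ∈ l, w.isWrite → w.val = r.val →
    ∃ l1 l2 l3, l = l1 ++ w :: l2 ++ r :: l3 ∧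
      (l2.filter (fun op => op.isRead = false)).length ≤ k - 1

/-- A history is `k`-atomic if it has a valid `k`-atomic total order. -/
def KAtomic (k : ℕ) (H : History) : Prop :=
  ∃ l, IsLinearization H l ∧ Valid l ∧ KAtomicOrder k l

/-- The cluster of a write `w`: the write together with its dictated reads. -/
noncomputable def cluster (H : History) (w : Op) : Finset Op :=
  insert w (H.filter (fun r => r.isRead = true ∧ r.val = w.val))

/-- Minimum finish time over the cluster of `w`. -/
noncomputable def fmin (H : History) (w : Op) : ℝ :=
  (cluster H w).inf' (Finset.insert_nonempty _ _) Op.f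

/-- Maximum start time over the cluster of `w`. -/
noncomputable def smax (H : History) (w : Op) : ℝ :=
  (cluster H w).sup' (Finset.insert_nonempty _ _) Op.s

/-- The zone of `w`'s cluster is forward if its minimum finish time is less than
its maximum start time. -/
def ForwardZone (H : History) (w : Op) : Prop := fmin H w < smax H w

/-- Low endpoint of the zone of `w`'s cluster. -/
noncomputable def zoneL (H : History) (w : Op) : ℝ := min (fmin H w) (smax H w)

/-- High endpoint of the zone of `w`'s cluster. -/
noncomputable def zoneH (H : History) (w : Op) : ℝ := max (fmin H w) (smax H w)

/-- The zone of `w`'s cluster, as a closed interval of time. -/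
noncomputable def zone (H : History) (w : Op) : Set ℝ := Set.Icc (zoneL H w) (zoneH H w)

section ListOrder

theorem List.mem_of_idxOf_lt_of_idxOf_lt {α : Type*} [BEq α] [LawfulBEq α]
    {l₁ l₂ l₃ : List α} {a b x : α} (hl : (l₁ ++ a :: l₂ ++ b :: l₃).Nodup)
    (hax : (l₁ ++ a :: l₂ ++ b :: l₃).idxOf a < (l₁ ++ a :: l₂ ++ b :: l₃).idxOf x)
    (hxb : (l₁ ++ a :: l₂ ++ b :: l₃).idxOf x < (l₁ ++ a :: l₂ ++ b :: l₃).idxOf b) :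
    x ∈ l₂ := by
  grind

theorem List.Pairwise.rel_of_mem_middle {α : Type*} {R : α → α → Prop}
    {l₁ l₂ l₃ : List α} {a b x : α} (hp : (l₁ ++ a :: l₂ ++ b :: l₃).Pairwise R)
    (hx : x ∈ l₂) : R a x ∧ R x b := by
  have hsub : List.Sublist [a, x, b] (l₁ ++ a :: l₂ ++ b :: l₃) := by
    rw [List.append_assoc]
    refine (List.Sublist.cons_cons a ?_).trans (List.sublist_append_right l₁ _)
    exact (List.singleton_sublist.2 hx).append (List.singleton_sublist.2 List.mem_cons_self)
  have := hp.sublist hsub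
  grind

variable {l : List Op} {a b : Op}

theorem Before.idxOf_lt (hl : l.Nodup) (h : Before l a b) : l.idxOf a < l.idxOf b := by
  obtain ⟨l₁, l₂, l₃, rfl⟩ := h
  grind

theorem Before.rel_of_pairwise {R : Op → Op → Prop} (hp : l.Pairwise R) (h : Before l a b) :
    R a b := by
  obtain ⟨l₁, l₂, l₃, rfl⟩ := h
  simp only [List.pairwise_append, List.pairwise_cons, List.mem_append, List.mem_cons] at hp
  exact hp.2.2 a (Or.inr (Or.inl rfl)) b (Or.inl rfl)

theorem before_or_before (ha : a ∈ l) (hb : b ∈ l) (hab : a ≠ b) :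
    Before l a b ∨ Before l b a := by
  induction l with
  | nil => simp at ha
  | cons x xs ih =>
    have cons_before {c : Op} (hc : c ∈ xs) : Before (x :: xs) x c := by
      obtain ⟨s, t, rfl⟩ := List.append_of_mem hc
      exact ⟨[], s, t, rfl⟩
    have before_cons {c d : Op} : Before xs c d → Before (x :: xs) c d := by
      rintro ⟨l₁, l₂, l₃, rfl⟩
      exact ⟨x :: l₁, l₂, l₃, rfl⟩
    rcases List.mem_cons.1 ha with rfl | ha'
    · exact Or.inl (cons_before ((List.mem_cons.1 hb).resolve_left hab.symm))
    rcases List.mem_cons.1 hb with rfl | hb'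
    · exact Or.inr (cons_before ha')
    exact (ih ha' hb').imp before_cons before_cons

theorem before_of_key_lt {κ : Type*} [LinearOrder κ] {key : Op → κ}
    (hp : l.Pairwise (fun a b => key a ≤ key b)) (ha : a ∈ l) (hb : b ∈ l)
    (h : key a < key b) : Before l a b := by
  have hab : a ≠ b := by rintro rfl; exact lt_irrefl _ h
  exact (before_or_before ha hb hab).resolve_right fun hba => (hba.rel_of_pairwise hp).not_gt h

theorem KAtomicOrder.before {k : ℕ} (hk : KAtomicOrder k l) {r w : Op} (hr : r ∈ l)
    (hrd : r.isRead = true) (hw : w ∈ l) (hww : w.isWrite) (hv : w.val = r.val) :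
    Before l w r := by
  obtain ⟨l₁, l₂, l₃, hl, -⟩ := hk r hr hrd w hw hww hv
  exact ⟨l₁, l₂, l₃, hl⟩

theorem KAtomicOrder.idxOf_lt_of_idxOf_lt (hk : KAtomicOrder 1 l) (hl : l.Nodup) {r w x : Op}
    (hr : r ∈ l) (hrd : r.isRead = true) (hw : w ∈ l) (hww : w.isWrite) (hv : w.val = r.val)
    (hx : x ∈ l) (hxw : x.isWrite) (hwx : l.idxOf w < l.idxOf x) : l.idxOf r < l.idxOf x := by
  obtain ⟨l₁, l₂, l₃, hl₁₂₃, hlen⟩ := hk r hr hrd w hw hww hv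
  have hxr : x ≠ r := by rintro rfl; simp [Op.isWrite, hrd] at hxw
  by_contra! hrx
  have hx₂ : x ∈ l₂ := by
    subst hl₁₂₃
    exact List.mem_of_idxOf_lt_of_idxOf_lt hl hwx
      (hrx.lt_of_ne fun h => hxr ((List.idxOf_inj hx).1 h))
  have : x ∈ l₂.filter (fun op => op.isRead = false) := List.mem_filter.2 ⟨hx₂, decide_eq_true hxw⟩
  exact absurd (List.length_pos_of_mem this) (by omega)

end ListOrder

section Clusters

variable {H : History}

theorem Wf.s_lt_f (hWf : Wf H) {op : Op} (hop : op ∈ H) : op.s < op.f := hWf.1 op hop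

theorem Wf.disjoint_times (hWf : Wf H) {x y : Op} (hx : x ∈ H) (hy : y ∈ H) (hxy : x ≠ y) :
    Disjoint ({x.s, x.f} : Set ℝ) {y.s, y.f} := by
  obtain ⟨hss, hff, hsf⟩ := hWf.2.1 x hx y hy hxy
  have hfs := (hWf.2.1 y hy x hx hxy.symm).2.2
  simp only [Set.disjoint_insert_left, Set.disjoint_singleton_left, Set.mem_insert_iff,
    Set.mem_singleton_iff]
  exact ⟨fun h => h.elim hss hsf, fun h => h.elim (fun h => hfs h.symm) hff⟩

theorem Wf.eq_of_val_eq (hWf : Wf H) {w₁ w₂ : Op} (h₁ : w₁ ∈ H) (h₂ : w₂ ∈ H)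
    (hw₁ : w₁.isWrite) (hw₂ : w₂.isWrite) (hv : w₁.val = w₂.val) : w₁ = w₂ :=
  hWf.2.2.1 w₁ h₁ w₂ h₂ hw₁ hw₂ hv

theorem mem_cluster {w x : Op} :
    x ∈ cluster H w ↔ x = w ∨ (x ∈ H ∧ x.isRead = true ∧ x.val = w.val) := by
  simp [cluster]

theorem self_mem_cluster {w : Op} : w ∈ cluster H w := mem_cluster.2 (Or.inl rfl)

theorem mem_of_mem_cluster {w x : Op} (hw : w ∈ H) (hx : x ∈ cluster H w) : x ∈ H := by
  rcases mem_cluster.1 hx with rfl | ⟨hxH, -⟩ <;> assumption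

theorem disjoint_cluster (hWf : Wf H) {w₁ w₂ : Op} (h₁ : w₁ ∈ H) (h₂ : w₂ ∈ H)
    (hw₁ : w₁.isWrite) (hw₂ : w₂.isWrite) (hne : w₁ ≠ w₂) :
    Disjoint (cluster H w₁) (cluster H w₂) := by
  refine Finset.disjoint_left.2 fun x hx₁ hx₂ => ?_
  rcases mem_cluster.1 hx₁ with rfl | ⟨-, hr₁, hv₁⟩ <;>
    rcases mem_cluster.1 hx₂ with rfl | ⟨-, hr₂, hv₂⟩
  · exact hne rfl
  · simp [Op.isWrite, hr₂] at hw₁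
  · simp [Op.isWrite, hr₁] at hw₂
  · exact hne (hWf.eq_of_val_eq h₁ h₂ hw₁ hw₂ (hv₁.symm.trans hv₂))

def clusterTimes (H : History) (w : Op) : Set ℝ := ⋃ x ∈ cluster H w, {x.s, x.f}

theorem disjoint_clusterTimes (hWf : Wf H) {w₁ w₂ : Op} (h₁ : w₁ ∈ H) (h₂ : w₂ ∈ H)
    (hw₁ : w₁.isWrite) (hw₂ : w₂.isWrite) (hne : w₁ ≠ w₂) :
    Disjoint (clusterTimes H w₁) (clusterTimes H w₂) := by
  simp only [clusterTimes, Set.disjoint_iUnion_left, Set.disjoint_iUnion_right]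
  intro y hy x hx
  refine hWf.disjoint_times (mem_of_mem_cluster h₁ hx) (mem_of_mem_cluster h₂ hy) ?_
  rintro rfl
  exact Finset.disjoint_left.1 (disjoint_cluster hWf h₁ h₂ hw₁ hw₂ hne) hx hy

theorem fmin_le {w x : Op} (hx : x ∈ cluster H w) : fmin H w ≤ x.f := Finset.inf'_le _ hx

theorem le_smax {w x : Op} (hx : x ∈ cluster H w) : x.s ≤ smax H w := Finset.le_sup' _ hx

theorem fmin_mem_clusterTimes (w : Op) : fmin H w ∈ clusterTimes H w := by
  obtain ⟨x, hx, e⟩ := Finset.exists_mem_eq_inf' (Finset.insert_nonempty w _) Op.f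
  exact Set.mem_biUnion hx (Or.inr e)

theorem smax_mem_clusterTimes (w : Op) : smax H w ∈ clusterTimes H w := by
  obtain ⟨x, hx, e⟩ := Finset.exists_mem_eq_sup' (Finset.insert_nonempty w _) Op.s
  exact Set.mem_biUnion hx (Or.inl e)

theorem zoneL_mem_clusterTimes (w : Op) : zoneL H w ∈ clusterTimes H w := by
  rw [zoneL]
  rcases min_choice (fmin H w) (smax H w) with h | h <;> rw [h]
  exacts [fmin_mem_clusterTimes w, smax_mem_clusterTimes w]

theorem smax_ne_fmin (hWf : Wf H) {w₁ w₂ : Op} (h₁ : w₁ ∈ H) (h₂ : w₂ ∈ H)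
    (hw₁ : w₁.isWrite) (hw₂ : w₂.isWrite) (hne : w₁ ≠ w₂) : smax H w₁ ≠ fmin H w₂ :=
  fun h => Set.disjoint_left.1 (disjoint_clusterTimes hWf h₁ h₂ hw₁ hw₂ hne)
    (smax_mem_clusterTimes w₁) (h ▸ fmin_mem_clusterTimes w₂)

theorem eq_of_zoneL_eq (hWf : Wf H) {w₁ w₂ : Op} (h₁ : w₁ ∈ H) (h₂ : w₂ ∈ H)
    (hw₁ : w₁.isWrite) (hw₂ : w₂.isWrite) (h : zoneL H w₁ = zoneL H w₂) : w₁ = w₂ := by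
  by_contra hne
  exact Set.disjoint_left.1 (disjoint_clusterTimes hWf h₁ h₂ hw₁ hw₂ hne)
    (zoneL_mem_clusterTimes w₁) (h ▸ zoneL_mem_clusterTimes w₂)

end Clusters

section Zones

variable {H : History} {w : Op}

theorem zone_of_forward (h : ForwardZone H w) : zone H w = Set.Icc (fmin H w) (smax H w) := by
  rw [zone, zoneL, zoneH, min_eq_left h.le, max_eq_right h.le]

theorem zoneL_of_forward (h : ForwardZone H w) : zoneL H w = fmin H w := min_eq_left h.le

theorem zone_of_not_forward (h : ¬ForwardZone H w) :
    zone H w = Set.Icc (smax H w) (fmin H w) := by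
  rw [zone, zoneL, zoneH, min_eq_right (not_lt.1 h), max_eq_left (not_lt.1 h)]

theorem zoneL_of_not_forward (h : ¬ForwardZone H w) : zoneL H w = smax H w :=
  min_eq_right (not_lt.1 h)

def ForwardZonesDisjoint (H : History) : Prop :=
  ∀ w₁ ∈ H, ∀ w₂ ∈ H, w₁.isWrite → w₂.isWrite → w₁ ≠ w₂ →
    ForwardZone H w₁ → ForwardZone H w₂ → zone H w₁ ∩ zone H w₂ = ∅

def NoBackwardZoneInForwardZone (H : History) : Prop :=
  ∀ wb ∈ H, ∀ wf ∈ H, wb.isWrite → wf.isWrite → wb ≠ wf →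
    ¬ForwardZone H wb → ForwardZone H wf → ¬zone H wb ⊆ zone H wf

def ClustersSeparated (H : History) : Prop :=
  ∀ w₁ ∈ H, ∀ w₂ ∈ H, w₁.isWrite → w₂.isWrite → w₁ ≠ w₂ →
    smax H w₁ < fmin H w₂ ∨ smax H w₂ < fmin H w₁

theorem ClustersSeparated.forwardZonesDisjoint (h : ClustersSeparated H) :
    ForwardZonesDisjoint H := by
  intro w₁ h₁ w₂ h₂ hw₁ hw₂ hne hf₁ hf₂
  rw [zone_of_forward hf₁, zone_of_forward hf₂, Set.Icc_inter_Icc, Set.Icc_eq_empty_iff,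
    max_le_iff, le_min_iff, le_min_iff]
  rintro ⟨⟨-, h₁₂⟩, h₂₁, -⟩
  rcases h w₁ h₁ w₂ h₂ hw₁ hw₂ hne with hlt | hlt <;> linarith

theorem ClustersSeparated.noBackwardZoneInForwardZone (h : ClustersSeparated H) :
    NoBackwardZoneInForwardZone H := by
  intro wb hb wf hf hwb hwf hne hnb hff hsub
  rw [zone_of_not_forward hnb, zone_of_forward hff, Set.Icc_subset_Icc_iff (not_lt.1 hnb)]
    at hsub
  rcases h wb hb wf hf hwb hwf hne with hlt | hlt <;> linarith [hsub.1, hsub.2]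

end Zones

section Atomic

variable {H : History}

theorem smax_lt_fmin_of_idxOf_lt (hWf : Wf H) {l : List Op} (hlin : IsLinearization H l)
    (hv : Valid l) (hk : KAtomicOrder 1 l) {w₁ w₂ : Op} (h₁ : w₁ ∈ H) (h₂ : w₂ ∈ H)
    (hw₁ : w₁.isWrite) (hw₂ : w₂.isWrite) (hidx : l.idxOf w₁ < l.idxOf w₂) :
    smax H w₁ < fmin H w₂ := by
  obtain ⟨hl, hmem⟩ := hlin
  have hne : w₁ ≠ w₂ := by rintro rfl; exact lt_irrefl _ hidx
  have before_w₂ : ∀ a ∈ cluster H w₁, l.idxOf a < l.idxOf w₂ := by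
    intro a ha
    rcases mem_cluster.1 ha with rfl | ⟨haH, hrd, hva⟩
    · exact hidx
    · exact hk.idxOf_lt_of_idxOf_lt hl ((hmem a).2 haH) hrd ((hmem w₁).2 h₁) hw₁ hva.symm
        ((hmem w₂).2 h₂) hw₂ hidx
  have from_w₂ : ∀ b ∈ cluster H w₂, l.idxOf w₂ ≤ l.idxOf b := by
    intro b hb
    rcases mem_cluster.1 hb with rfl | ⟨hbH, hrd, hvb⟩
    · exact le_rfl
    · exact ((hk.before ((hmem b).2 hbH) hrd ((hmem w₂).2 h₂) hw₂ hvb.symm).idxOf_lt hl).le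
  have s_le_f : ∀ a ∈ cluster H w₁, ∀ b ∈ cluster H w₂, a.s ≤ b.f := by
    intro a ha b hb
    by_contra! hba
    have hb_a := (hv b ((hmem b).2 (mem_of_mem_cluster h₂ hb)) a
      ((hmem a).2 (mem_of_mem_cluster h₁ ha)) hba).idxOf_lt hl
    have := before_w₂ a ha
    have := from_w₂ b hb
    omega
  exact (Finset.sup'_le _ _ fun a ha => Finset.le_inf' _ _ (s_le_f a ha)).lt_of_ne
    (smax_ne_fmin hWf h₁ h₂ hw₁ hw₂ hne)

theorem clustersSeparated_of_kAtomic_one (hWf : Wf H) (h : KAtomic 1 H) :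
    ClustersSeparated H := by
  obtain ⟨l, hlin, hv, hk⟩ := h
  intro w₁ h₁ w₂ h₂ hw₁ hw₂ hne
  have hidx : l.idxOf w₁ ≠ l.idxOf w₂ := fun h => hne ((List.idxOf_inj ((hlin.2 w₁).2 h₁)).1 h)
  rcases hidx.lt_or_gt with hlt | hlt
  · exact Or.inl (smax_lt_fmin_of_idxOf_lt hWf hlin hv hk h₁ h₂ hw₁ hw₂ hlt)
  · exact Or.inr (smax_lt_fmin_of_idxOf_lt hWf hlin hv hk h₂ h₁ hw₂ hw₁ hlt)

end Atomic

section Converse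

variable {H : History}

theorem zoneL_lt_zoneL (hZ₁ : ForwardZonesDisjoint H)
    (hZ₂ : NoBackwardZoneInForwardZone H) {w₁ w₂ : Op} (h₁ : w₁ ∈ H) (h₂ : w₂ ∈ H)
    (hw₁ : w₁.isWrite) (hw₂ : w₂.isWrite) (hne : w₁ ≠ w₂) (h : fmin H w₁ < smax H w₂) :
    zoneL H w₁ < zoneL H w₂ := by
  by_cases hf₁ : ForwardZone H w₁ <;> by_cases hf₂ : ForwardZone H w₂
  · rw [zoneL_of_forward hf₁, zoneL_of_forward hf₂]
    by_contra! hle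
    have hmem : fmin H w₁ ∈ zone H w₁ ∩ zone H w₂ := by
      rw [zone_of_forward hf₁, zone_of_forward hf₂]
      exact ⟨⟨le_rfl, hf₁.le⟩, hle, h.le⟩
    simp [hZ₁ w₁ h₁ w₂ h₂ hw₁ hw₂ hne hf₁ hf₂] at hmem
  · rw [zoneL_of_forward hf₁, zoneL_of_not_forward hf₂]
    exact h
  · rw [zoneL_of_not_forward hf₁, zoneL_of_forward hf₂]
    by_contra! hle
    refine hZ₂ w₁ h₁ w₂ h₂ hw₁ hw₂ hne hf₁ hf₂ ?_
    rw [zone_of_not_forward hf₁, zone_of_forward hf₂]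
    exact Set.Icc_subset_Icc hle h.le
  · rw [zoneL_of_not_forward hf₁, zoneL_of_not_forward hf₂]
    exact (not_lt.1 hf₁).trans_lt h

noncomputable def dictatingWrite (H : History) (op : Op) : Op :=
  if h : ∃ w ∈ H, w.isWrite ∧ w.val = op.val then h.choose else op

theorem dictatingWrite_spec (hWf : Wf H) {op : Op} (hop : op ∈ H) :
    dictatingWrite H op ∈ H ∧ (dictatingWrite H op).isWrite ∧
      (dictatingWrite H op).val = op.val := by
  have h : ∃ w ∈ H, w.isWrite ∧ w.val = op.val := by
    cases hr : op.isRead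
    · exact ⟨op, hop, hr, rfl⟩
    · obtain ⟨w, hw, hww, hv, -⟩ := hWf.2.2.2 op hop hr
      exact ⟨w, hw, hww, hv⟩
  rw [dictatingWrite, dif_pos h]
  exact h.choose_spec

theorem dictatingWrite_eq (hWf : Wf H) {op w : Op} (hop : op ∈ H) (hw : w ∈ H)
    (hww : w.isWrite) (hv : w.val = op.val) : dictatingWrite H op = w :=
  have ⟨hdH, hdw, hdv⟩ := dictatingWrite_spec hWf hop
  hWf.eq_of_val_eq hdH hw hdw hww (hdv.trans hv.symm)

theorem mem_cluster_dictatingWrite (hWf : Wf H) {op : Op} (hop : op ∈ H) :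
    op ∈ cluster H (dictatingWrite H op) := by
  cases hr : op.isRead
  · rw [dictatingWrite_eq hWf hop hop hr rfl]
    exact self_mem_cluster
  · exact mem_cluster.2 (Or.inr ⟨hop, hr, (dictatingWrite_spec hWf hop).2.2.symm⟩)

noncomputable def zoneKey (H : History) (op : Op) : ℝ ×ₗ ℝ :=
  toLex (zoneL H (dictatingWrite H op), op.s)

theorem zoneKey_lt_of_f_lt_s (hWf : Wf H) (hZ₁ : ForwardZonesDisjoint H)
    (hZ₂ : NoBackwardZoneInForwardZone H) {a b : Op} (ha : a ∈ H) (hb : b ∈ H)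
    (h : a.f < b.s) : zoneKey H a < zoneKey H b := by
  obtain ⟨hwa, hwwa, -⟩ := dictatingWrite_spec hWf ha
  obtain ⟨hwb, hwwb, -⟩ := dictatingWrite_spec hWf hb
  rw [zoneKey, zoneKey, Prod.Lex.toLex_lt_toLex]
  by_cases hab : dictatingWrite H a = dictatingWrite H b
  · exact Or.inr ⟨by rw [hab], (hWf.s_lt_f ha).trans h⟩
  refine Or.inl (zoneL_lt_zoneL hZ₁ hZ₂ hwa hwb hwwa hwwb hab ?_)
  calc fmin H (dictatingWrite H a) ≤ a.f := fmin_le (mem_cluster_dictatingWrite hWf ha)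
    _ < b.s := h
    _ ≤ smax H (dictatingWrite H b) := le_smax (mem_cluster_dictatingWrite hWf hb)

theorem exists_linearization_pairwise {κ : Type*} [LinearOrder κ] (H : History)
    (key : Op → κ) : ∃ l, IsLinearization H l ∧ l.Pairwise (fun a b => key a ≤ key b) := by
  let le : Op → Op → Bool := fun a b => decide (key a ≤ key b)
  refine ⟨H.toList.mergeSort le, ⟨?_, fun op => ?_⟩, ?_⟩
  · exact (List.mergeSort_perm _ _).nodup_iff.2 H.nodup_toList
  · simp
  · have trans (a b c : Op) (hab : le a b) (hbc : le b c) : le a c := by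
      simp only [le, decide_eq_true_eq] at *
      exact hab.trans hbc
    have total (a b : Op) : le a b || le b a := by simpa [le] using le_total (key a) (key b)
    simpa [le] using List.pairwise_mergeSort trans total H.toList

theorem valid_of_pairwise_zoneKey (hWf : Wf H) (hZ₁ : ForwardZonesDisjoint H)
    (hZ₂ : NoBackwardZoneInForwardZone H) {l : List Op} (hlin : IsLinearization H l)
    (hp : l.Pairwise (fun a b => zoneKey H a ≤ zoneKey H b)) : Valid l :=
  fun a ha b hb h => before_of_key_lt hp ha hb
    (zoneKey_lt_of_f_lt_s hWf hZ₁ hZ₂ ((hlin.2 a).1 ha) ((hlin.2 b).1 hb) h)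

/-- A write `x` between `w` and a read `r` of `w` has `zoneL` between those of `w` and of the
cluster of `r`, which is `w`'s own; since `zoneL` separates clusters, `x = w`. -/
theorem kAtomicOrder_one_of_pairwise_zoneKey (hWf : Wf H) (hZ₁ : ForwardZonesDisjoint H)
    (hZ₂ : NoBackwardZoneInForwardZone H) {l : List Op} (hlin : IsLinearization H l)
    (hp : l.Pairwise (fun a b => zoneKey H a ≤ zoneKey H b)) : KAtomicOrder 1 l := by
  intro r hr hrd w hw hww hv
  have hrH := (hlin.2 r).1 hr
  have hwH := (hlin.2 w).1 hw
  have hwr : w.f < r.s := by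
    obtain ⟨w', hw', hww', hv', hf⟩ := hWf.2.2.2 r hrH hrd
    rwa [hWf.eq_of_val_eq hw' hwH hww' hww (hv'.trans hv.symm)] at hf
  obtain ⟨l₁, l₂, l₃, hl⟩ :=
    before_of_key_lt hp hw hr (zoneKey_lt_of_f_lt_s hWf hZ₁ hZ₂ hwH hrH hwr)
  refine ⟨l₁, l₂, l₃, hl, ?_⟩
  suffices no_write : ∀ x ∈ l₂, ¬x.isWrite by
    simpa [Op.isWrite] using no_write
  intro x hx hxw
  have hxH : x ∈ H := (hlin.2 x).1 (by rw [hl]; simp [hx])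
  obtain ⟨hwx, hxr⟩ := (hl ▸ hp).rel_of_mem_middle hx
  have hwx := Prod.Lex.monotone_fst _ _ hwx
  have hxr := Prod.Lex.monotone_fst _ _ hxr
  simp only [zoneKey, ofLex_toLex, dictatingWrite_eq hWf hwH hwH hww rfl,
    dictatingWrite_eq hWf hxH hxH hxw rfl, dictatingWrite_eq hWf hrH hwH hww hv] at hwx hxr
  have hxw_eq : x = w := eq_of_zoneL_eq hWf hxH hwH hxw hww (hxr.antisymm hwx)
  have hnd : (l₁ ++ w :: l₂ ++ r :: l₃).Nodup := hl ▸ hlin.1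
  rw [List.append_assoc, List.nodup_append, List.cons_append, List.nodup_cons] at hnd
  exact hnd.2.1.1 (List.mem_append_left _ (hxw_eq ▸ hx))

theorem kAtomic_one_of_zones (hWf : Wf H) (hZ₁ : ForwardZonesDisjoint H)
    (hZ₂ : NoBackwardZoneInForwardZone H) : KAtomic 1 H :=
  have ⟨l, hlin, hp⟩ := exists_linearization_pairwise H (zoneKey H)
  ⟨l, hlin, valid_of_pairwise_zoneKey hWf hZ₁ hZ₂ hlin hp,
    kAtomicOrder_one_of_pairwise_zoneKey hWf hZ₁ hZ₂ hlin hp⟩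

end Converse

/-- Gibbons–Korach: a well-formed history is 1-atomic iff no two forward zones
overlap and no backward zone is contained entirely in a forward zone. -/
theorem stmt_2 (H : History) (hWf : Wf H) :
    KAtomic 1 H ↔
      ((∀ w1 ∈ H, ∀ w2 ∈ H, w1.isWrite → w2.isWrite → w1 ≠ w2 →
          ForwardZone H w1 → ForwardZone H w2 → zone H w1 ∩ zone H w2 = ∅) ∧
       (∀ wb ∈ H, ∀ wf ∈ H, wb.isWrite → wf.isWrite → wb ≠ wf →
          ¬ ForwardZone H wb → ForwardZone H wf → ¬ zone H wb ⊆ zone H wf)) :=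
  ⟨fun h => ⟨(clustersSeparated_of_kAtomic_one hWf h).forwardZonesDisjoint,
      (clustersSeparated_of_kAtomic_one hWf h).noBackwardZoneInForwardZone⟩,
    fun ⟨hZ₁, hZ₂⟩ => kAtomic_one_of_zones hWf hZ₁ hZ₂⟩
end

section
/- The relation X ≤_H Y defined on the chunks and dangling clusters of a history H by X.h < Y.l (where X.l, X.h are the minimum low endpoint and maximum high endpoint of zones in X) is a strict partial order, and it totally orders the maximal chunks of CS(H). -/
open scoped Classical

/-- Union of the forward zones of the clusters (identified by their dictating
writes) in `K`. -/
def fwdUnion (H : History) (K : Finset Op) : Set ℝ :=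
  ⋃ w ∈ {w ∈ (K : Set Op) | ForwardZone H w}, zone H w

/-- Union of the backward zones of the clusters in `K`. -/
def bwdUnion (H : History) (K : Finset Op) : Set ℝ :=
  ⋃ w ∈ {w ∈ (K : Set Op) | ¬ ForwardZone H w}, zone H w

/-- A chunk: a set of clusters (identified by their dictating writes) whose
forward zones union to a continuous nonempty time interval containing the
union of the chunk's backward zones. -/
def IsChunk (H : History) (K : Finset Op) : Prop :=
  (∀ w ∈ K, w ∈ H ∧ w.isWrite) ∧
  (fwdUnion H K).Nonempty ∧ (fwdUnion H K).OrdConnected ∧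
  bwdUnion H K ⊆ fwdUnion H K

/-- A maximal chunk: no further cluster can be added while remaining a chunk. -/
def MaximalChunk (H : History) (K : Finset Op) : Prop :=
  IsChunk H K ∧ ∀ w ∈ H, w.isWrite → w ∉ K → ¬ IsChunk H (insert w K)

/-- A chunk set of `H`: a set of maximal chunks covering every forward cluster. -/
def ChunkSet (H : History) (CS : Finset (Finset Op)) : Prop :=
  (∀ K ∈ CS, MaximalChunk H K) ∧
  ∀ w ∈ H, w.isWrite → ForwardZone H w → ∃ K ∈ CS, w ∈ K

/-- The projection `H|K` of `H` onto the chunk `K`: all operations of clusters in `K`. -/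
noncomputable def proj (H : History) (K : Finset Op) : History :=
  H.filter (fun op => ∃ w ∈ K, op ∈ cluster H w)

/-- Minimum low endpoint of the zones of an element (chunk or dangling cluster). -/
noncomputable def elemL (H : History) (X : Finset Op) : ℝ := sInf (zoneL H '' (X : Set Op))

/-- Maximum high endpoint of the zones of an element. -/
noncomputable def elemH (H : History) (X : Finset Op) : ℝ := sSup (zoneH H '' (X : Set Op))

/-- The relation `X ≤_H Y` iff `X.h < Y.l`. -/
def relH (H : History) (X Y : Finset Op) : Prop := elemH H X < elemL H Y

/-! Two maximal chunks whose spans `[X.l, X.h]` overlap have overlapping forward unions, since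
the forward union of a chunk is exactly its span. The forward union of the second chunk is
connected and splits into the closed sets covered by clusters of the first chunk and by the
other clusters; a cluster of the second kind meeting the first chunk could be added to it, so
by maximality these two closed sets are disjoint, and connectedness puts everything on the first
side. Then every cluster of the second chunk can be added to the first, so the chunks coincide. -/

section Zones

variable {H : History} {K : Finset Op} {w : Op}

lemma zoneL_le_zoneH (H : History) (w : Op) : zoneL H w ≤ zoneH H w := min_le_max

lemma zone_nonempty (H : History) (w : Op) : (zone H w).Nonempty :=
  Set.nonempty_Icc.2 (zoneL_le_zoneH H w)

lemma mem_fwdUnion {x : ℝ} : x ∈ fwdUnion H K ↔ ∃ w ∈ K, ForwardZone H w ∧ x ∈ zone H w := by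
  simp only [fwdUnion, Set.mem_iUnion, Set.mem_ofPred_eq, Finset.mem_coe, exists_prop, and_assoc]

lemma mem_bwdUnion {x : ℝ} :
    x ∈ bwdUnion H K ↔ ∃ w ∈ K, ¬ ForwardZone H w ∧ x ∈ zone H w := by
  simp only [bwdUnion, Set.mem_iUnion, Set.mem_ofPred_eq, Finset.mem_coe, exists_prop, and_assoc]

lemma zone_subset_fwdUnion (hw : w ∈ K) (hf : ForwardZone H w) : zone H w ⊆ fwdUnion H K :=
  fun _ hx => mem_fwdUnion.2 ⟨w, hw, hf, hx⟩

lemma zone_subset_bwdUnion (hw : w ∈ K) (hf : ¬ ForwardZone H w) : zone H w ⊆ bwdUnion H K :=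
  fun _ hx => mem_bwdUnion.2 ⟨w, hw, hf, hx⟩

lemma isClosed_fwdUnion (H : History) (K : Finset Op) : IsClosed (fwdUnion H K) :=
  ((K.finite_toSet).subset fun _ hw => hw.1).isClosed_biUnion fun _ _ => isClosed_Icc

lemma fwdUnion_subset_union_sdiff (H : History) (K K' : Finset Op) :
    fwdUnion H K' ⊆ fwdUnion H K ∪ fwdUnion H (K' \ K) := by
  intro x hx
  obtain ⟨w, hw, hf, hxw⟩ := mem_fwdUnion.1 hx
  by_cases hwK : w ∈ K
  · exact Or.inl (zone_subset_fwdUnion hwK hf hxw)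
  · exact Or.inr (zone_subset_fwdUnion (Finset.mem_sdiff.2 ⟨hw, hwK⟩) hf hxw)

lemma fwdUnion_insert_of_forward (hf : ForwardZone H w) :
    fwdUnion H (insert w K) = zone H w ∪ fwdUnion H K := by
  ext x
  simp only [mem_fwdUnion, Finset.mem_insert, Set.mem_union]
  constructor
  · rintro ⟨v, rfl | hv, hvf, hx⟩
    exacts [Or.inl hx, Or.inr ⟨v, hv, hvf, hx⟩]
  · rintro (hx | ⟨v, hv, hvf, hx⟩)
    exacts [⟨w, Or.inl rfl, hf, hx⟩, ⟨v, Or.inr hv, hvf, hx⟩]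

lemma fwdUnion_insert_of_not_forward (hf : ¬ ForwardZone H w) :
    fwdUnion H (insert w K) = fwdUnion H K := by
  ext x
  simp only [mem_fwdUnion, Finset.mem_insert]
  constructor
  · rintro ⟨v, rfl | hv, hvf, hx⟩
    exacts [absurd hvf hf, ⟨v, hv, hvf, hx⟩]
  · rintro ⟨v, hv, hvf, hx⟩
    exact ⟨v, Or.inr hv, hvf, hx⟩

lemma bwdUnion_insert_of_forward (hf : ForwardZone H w) :
    bwdUnion H (insert w K) = bwdUnion H K := by
  ext x
  simp only [mem_bwdUnion, Finset.mem_insert]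
  constructor
  · rintro ⟨v, rfl | hv, hvf, hx⟩
    exacts [absurd hf hvf, ⟨v, hv, hvf, hx⟩]
  · rintro ⟨v, hv, hvf, hx⟩
    exact ⟨v, Or.inr hv, hvf, hx⟩

lemma bwdUnion_insert_of_not_forward (hf : ¬ ForwardZone H w) :
    bwdUnion H (insert w K) = zone H w ∪ bwdUnion H K := by
  ext x
  simp only [mem_bwdUnion, Finset.mem_insert, Set.mem_union]
  constructor
  · rintro ⟨v, rfl | hv, hvf, hx⟩
    exacts [Or.inl hx, Or.inr ⟨v, hv, hvf, hx⟩]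
  · rintro (hx | ⟨v, hv, hvf, hx⟩)
    exacts [⟨w, Or.inl rfl, hf, hx⟩, ⟨v, Or.inr hv, hvf, hx⟩]

end Zones

section Elements

variable {H : History} {X : Finset Op} {w : Op}

lemma elemL_le (hw : w ∈ X) : elemL H X ≤ zoneL H w :=
  csInf_le (X.finite_toSet.image _).bddBelow ⟨w, hw, rfl⟩

lemma le_elemH (hw : w ∈ X) : zoneH H w ≤ elemH H X :=
  le_csSup (X.finite_toSet.image _).bddAbove ⟨w, hw, rfl⟩

lemma exists_zoneL_eq_elemL (hX : X.Nonempty) : ∃ w ∈ X, zoneL H w = elemL H X :=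
  ((Finset.coe_nonempty.2 hX).image _).csInf_mem (X.finite_toSet.image _)

lemma exists_zoneH_eq_elemH (hX : X.Nonempty) : ∃ w ∈ X, zoneH H w = elemH H X :=
  ((Finset.coe_nonempty.2 hX).image _).csSup_mem (X.finite_toSet.image _)

lemma elemL_le_elemH (hX : X.Nonempty) : elemL H X ≤ elemH H X := by
  obtain ⟨w, hw⟩ := hX
  exact (elemL_le hw).trans ((zoneL_le_zoneH H w).trans (le_elemH hw))

lemma relH_irrefl (hX : X.Nonempty) : ¬ relH H X X :=
  (elemL_le_elemH hX).not_gt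

lemma relH_trans {X Y Z : Finset Op} (hY : Y.Nonempty) (hXY : relH H X Y) (hYZ : relH H Y Z) :
    relH H X Z :=
  hXY.trans ((elemL_le_elemH hY).trans_lt hYZ)

end Elements

namespace IsChunk

variable {H : History} {K : Finset Op} {w : Op}

lemma nonempty (hK : IsChunk H K) : K.Nonempty := by
  obtain ⟨x, hx⟩ := hK.2.1
  obtain ⟨w, hw, -⟩ := mem_fwdUnion.1 hx
  exact ⟨w, hw⟩

lemma zone_subset_fwdUnion (hK : IsChunk H K) (hw : w ∈ K) : zone H w ⊆ fwdUnion H K := by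
  by_cases hf : ForwardZone H w
  · exact _root_.zone_subset_fwdUnion hw hf
  · exact (zone_subset_bwdUnion hw hf).trans hK.2.2.2

lemma fwdUnion_eq_Icc (hK : IsChunk H K) : fwdUnion H K = Set.Icc (elemL H K) (elemH H K) := by
  refine Set.Subset.antisymm (fun x hx => ?_) ?_
  · obtain ⟨w, hw, -, hxl, hxh⟩ := mem_fwdUnion.1 hx
    exact ⟨(elemL_le hw).trans hxl, hxh.trans (le_elemH hw)⟩
  · obtain ⟨wl, hwl, hl⟩ := exists_zoneL_eq_elemL (H := H) hK.nonempty
    obtain ⟨wh, hwh, hh⟩ := exists_zoneH_eq_elemH (H := H) hK.nonempty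
    apply hK.2.2.1.out
    · exact hK.zone_subset_fwdUnion hwl ⟨hl.le, hl ▸ zoneL_le_zoneH H wl⟩
    · exact hK.zone_subset_fwdUnion hwh ⟨hh ▸ zoneL_le_zoneH H wh, hh.ge⟩

lemma insert_of_forward (hK : IsChunk H K) (hwH : w ∈ H) (hwW : w.isWrite)
    (hf : ForwardZone H w) (hmeet : (zone H w ∩ fwdUnion H K).Nonempty) :
    IsChunk H (insert w K) := by
  obtain ⟨x, hxw, hxK⟩ := hmeet
  refine ⟨?_, ?_, ?_, ?_⟩
  · simpa only [Finset.forall_mem_insert] using ⟨⟨hwH, hwW⟩, hK.1⟩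
  · exact ⟨x, fwdUnion_insert_of_forward hf ▸ Or.inl hxw⟩
  · rw [fwdUnion_insert_of_forward hf, ← isPreconnected_iff_ordConnected]
    exact isPreconnected_Icc.union x hxw hxK hK.2.2.1.isPreconnected
  · rw [fwdUnion_insert_of_forward hf, bwdUnion_insert_of_forward hf]
    exact hK.2.2.2.trans Set.subset_union_right

lemma insert_of_zone_subset (hK : IsChunk H K) (hwH : w ∈ H) (hwW : w.isWrite)
    (hsub : zone H w ⊆ fwdUnion H K) : IsChunk H (insert w K) := by
  by_cases hf : ForwardZone H w
  · obtain ⟨x, hx⟩ := zone_nonempty H w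
    exact hK.insert_of_forward hwH hwW hf ⟨x, hx, hsub hx⟩
  · refine ⟨?_, ?_, ?_, ?_⟩
    · simpa only [Finset.forall_mem_insert] using ⟨⟨hwH, hwW⟩, hK.1⟩
    · rw [fwdUnion_insert_of_not_forward hf]; exact hK.2.1
    · rw [fwdUnion_insert_of_not_forward hf]; exact hK.2.2.1
    · rw [fwdUnion_insert_of_not_forward hf, bwdUnion_insert_of_not_forward hf]
      exact Set.union_subset hsub hK.2.2.2

lemma fwdUnion_inter_nonempty {K' : Finset Op} (hK : IsChunk H K) (hK' : IsChunk H K')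
    (h : ¬ relH H K K') (h' : ¬ relH H K' K) : (fwdUnion H K ∩ fwdUnion H K').Nonempty := by
  rw [relH, not_lt] at h h'
  rw [hK.fwdUnion_eq_Icc, hK'.fwdUnion_eq_Icc]
  exact ⟨max (elemL H K) (elemL H K'),
    ⟨le_max_left _ _, max_le (elemL_le_elemH hK.nonempty) h⟩,
    ⟨le_max_right _ _, max_le h' (elemL_le_elemH hK'.nonempty)⟩⟩

end IsChunk

namespace MaximalChunk

variable {H : History} {K K' : Finset Op}

lemma disjoint_fwdUnion_sdiff (hK : MaximalChunk H K) (hK' : ∀ w ∈ K', w ∈ H ∧ w.isWrite) :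
    Disjoint (fwdUnion H K) (fwdUnion H (K' \ K)) := by
  refine Set.disjoint_right.2 fun x hx hxK => ?_
  obtain ⟨w, hw, hf, hxw⟩ := mem_fwdUnion.1 hx
  obtain ⟨hwK', hwK⟩ := Finset.mem_sdiff.1 hw
  obtain ⟨hwH, hwW⟩ := hK' w hwK'
  exact hK.2 w hwH hwW hwK (hK.1.insert_of_forward hwH hwW hf ⟨x, hxw, hxK⟩)

lemma fwdUnion_subset (hK : MaximalChunk H K) (hK' : IsChunk H K')
    (hmeet : (fwdUnion H K ∩ fwdUnion H K').Nonempty) : fwdUnion H K' ⊆ fwdUnion H K := by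
  have hdisj := hK.disjoint_fwdUnion_sdiff hK'.1
  have hsplit := isPreconnected_iff_subset_of_disjoint_closed.1 hK'.2.2.1.isPreconnected
    _ _ (isClosed_fwdUnion H K) (isClosed_fwdUnion H (K' \ K))
    (fwdUnion_subset_union_sdiff H K K')
    (Set.subset_empty_iff.1 fun _ hx => hdisj.le_bot hx.2)
  refine hsplit.resolve_right fun hsub => ?_
  obtain ⟨x, hxK, hxK'⟩ := hmeet
  exact Set.disjoint_left.1 hdisj hxK (hsub hxK')

lemma subset_of_fwdUnion_inter_nonempty (hK : MaximalChunk H K) (hK' : IsChunk H K')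
    (hmeet : (fwdUnion H K ∩ fwdUnion H K').Nonempty) : K' ⊆ K := by
  intro w hw
  by_contra hwK
  obtain ⟨hwH, hwW⟩ := hK'.1 w hw
  exact hK.2 w hwH hwW hwK <| hK.1.insert_of_zone_subset hwH hwW <|
    (hK'.zone_subset_fwdUnion hw).trans (hK.fwdUnion_subset hK' hmeet)

lemma relH_or_relH (hK : MaximalChunk H K) (hK' : MaximalChunk H K') (hne : K ≠ K') :
    relH H K K' ∨ relH H K' K := by
  by_contra! h
  have hmeet := hK.1.fwdUnion_inter_nonempty hK'.1 h.1 h.2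
  exact hne (Finset.Subset.antisymm
    (hK'.subset_of_fwdUnion_inter_nonempty hK.1 (Set.inter_comm _ _ ▸ hmeet))
    (hK.subset_of_fwdUnion_inter_nonempty hK'.1 hmeet))

end MaximalChunk

theorem stmt_13_general (H : History) (CS : Finset (Finset Op))
    (hCS : ChunkSet H CS) (Elem : Set (Finset Op))
    (hElem : Elem = {X | X ∈ CS} ∪
      {X | ∃ w, w ∈ H ∧ w.isWrite ∧ ¬ ForwardZone H w ∧ (∀ K ∈ CS, w ∉ K) ∧ X = {w}}) :
    (∀ X ∈ Elem, ¬ relH H X X) ∧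
    (∀ X ∈ Elem, ∀ Y ∈ Elem, ∀ Z ∈ Elem, relH H X Y → relH H Y Z → relH H X Z) ∧
    (∀ K1 ∈ CS, ∀ K2 ∈ CS, K1 ≠ K2 → relH H K1 K2 ∨ relH H K2 K1) := by
  have hne : ∀ X ∈ Elem, X.Nonempty := by
    subst hElem
    rintro X (hX | ⟨w, -, -, -, -, rfl⟩)
    · exact (hCS.1 X hX).1.nonempty
    · exact Finset.singleton_nonempty w
  exact ⟨fun X hX => relH_irrefl (hne X hX),
    fun X _ Y hY Z _ => relH_trans (hne Y hY),
    fun K1 h1 K2 h2 => (hCS.1 K1 h1).relH_or_relH (hCS.1 K2 h2)⟩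

/-- The relation `≤_H` on the chunks and dangling clusters of `H` is a strict
partial order, and it totally orders the maximal chunks of the chunk set. -/
theorem stmt_13 (H : History) (hWf : Wf H) (CS : Finset (Finset Op))
    (hCS : ChunkSet H CS) (Elem : Set (Finset Op))
    (hElem : Elem = {X | X ∈ CS} ∪
      {X | ∃ w, w ∈ H ∧ w.isWrite ∧ ¬ ForwardZone H w ∧ (∀ K ∈ CS, w ∉ K) ∧ X = {w}}) :
    (∀ X ∈ Elem, ¬ relH H X X) ∧
    (∀ X ∈ Elem, ∀ Y ∈ Elem, ∀ Z ∈ Elem, relH H X Y → relH H Y Z → relH H X Z) ∧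
    (∀ K1 ∈ CS, ∀ K2 ∈ CS, K1 ≠ K2 → relH H K1 K2 ∨ relH H K2 K1) :=
  stmt_13_general H CS hCS Elem hElem
end
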